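/- Let A be an n×n real symmetric positive semidefinite matrix with eigenvalues λ₁ ≥ ⋯ ≥ λ_n and orthonormal eigenvectors v₁, …, v_n, let 1 ≤ ℓ < n, and let ⌊A⌋_ℓ = ∑_{j=1}^{ℓ} λ_j v_j v_jᵀ be a best rank-ℓ approximation of A obtained by truncating its eigendecomposition. Then for every μ > 0, ‖(⌊A⌋_ℓ + μI)⁻¹ − (A + μI)⁻¹‖ = λ_{ℓ+1} / (μ·(λ_{ℓ+1} + μ)); in particular, the general bound ‖(Â + μI)⁻¹ − (A + μI)⁻¹‖ ≤ (1/μ)·‖A−Â‖/(‖A−Â‖+μ) is attained when Â = ⌊A⌋_ℓ. -/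

import Mathlib

open Matrix MeasureTheory ProbabilityTheory
open scoped Classical

/-- Moore–Penrose pseudoinverse (characterized by the four Penrose conditions). -/
noncomputable def pinv {m n : ℕ} (A : Matrix (Fin m) (Fin n) ℝ) : Matrix (Fin n) (Fin m) ℝ :=
  if h : ∃ B : Matrix (Fin n) (Fin m) ℝ,
      A * B * A = A ∧ B * A * B = B ∧ (A * B)ᵀ = A * B ∧ (B * A)ᵀ = B * A
  then h.choose else 0

/-- Nyström approximation of `A` with respect to the test matrix `X`. -/
noncomputable def nystrom {n l : ℕ} (A : Matrix (Fin n) (Fin n) ℝ)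
    (X : Matrix (Fin n) (Fin l) ℝ) : Matrix (Fin n) (Fin n) ℝ :=
  A * X * pinv (Xᵀ * A * X) * (A * X)ᵀ

/-- Spectral (ℓ² operator) norm of a matrix. -/
noncomputable def specNorm {m n : ℕ} (M : Matrix (Fin m) (Fin n) ℝ) : ℝ :=
  ‖LinearMap.toContinuousLinearMap (Matrix.toEuclideanLin M)‖

/-- Frobenius norm of a matrix. -/
noncomputable def frobNorm {m n : ℕ} (M : Matrix (Fin m) (Fin n) ℝ) : ℝ :=
  Real.sqrt (∑ i, ∑ j, (M i j) ^ 2)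

/-- Euclidean norm of a vector. -/
noncomputable def euclNorm {n : ℕ} (x : Fin n → ℝ) : ℝ :=
  Real.sqrt (∑ i, (x i) ^ 2)

/-- Law of an `n × l` random matrix with independent standard normal entries. -/
noncomputable def gaussianEnsemble (n l : ℕ) : Measure (Fin n → Fin l → ℝ) :=
  Measure.pi fun _ => Measure.pi fun _ => gaussianReal 0 1

/-- The psd square root of a psd matrix (junk value `0` otherwise). -/
noncomputable def matSqrt {n : ℕ} (M : Matrix (Fin n) (Fin n) ℝ) : Matrix (Fin n) (Fin n) ℝ :=
  if hM : M.PosSemidef then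
    (hM.1.eigenvectorUnitary : Matrix (Fin n) (Fin n) ℝ) * diagonal (Real.sqrt ∘ hM.1.eigenvalues)
      * (star hM.1.eigenvectorUnitary : Matrix (Fin n) (Fin n) ℝ)
  else 0

/-- ℓ² condition number of a symmetric matrix: ratio of the largest to the smallest
eigenvalue (junk value `0` for non-symmetric matrices). -/
noncomputable def kappa {n : ℕ} (M : Matrix (Fin n) (Fin n) ℝ) : ℝ :=
  if hM : M.IsHermitian then (⨆ i, hM.eigenvalues i) / (⨅ i, hM.eigenvalues i) else 0

/-! Both regularized matrices are diagonalized by `V`, so the difference of their inverses is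
`V * diagonal f * Vᵀ` with `f j = 0` for `j < ℓ` and `f j = 1/μ - 1/(λ_j + μ) = λ_j/(μ(λ_j + μ))`
otherwise. Orthogonal conjugation preserves the spectral norm, the spectral norm of a diagonal
matrix is `max_j |f j|`, and since `t ↦ t/(μ(t + μ))` increases on `t ≥ 0` while `λ` is antitone,
the maximum is attained at `j = ℓ`. -/

open scoped Matrix.Norms.L2Operator

theorem specNorm_eq_l2_opNorm {m n : ℕ} (M : Matrix (Fin m) (Fin n) ℝ) : specNorm M = ‖M‖ := rfl

namespace Matrix

variable {n : Type*} [Fintype n] [DecidableEq n]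

theorem conj_diagonal_add_smul_one {R : Type*} [CommRing R] {V : Matrix n n R}
    (hV : V * Vᵀ = 1) (g : n → R) (μ : R) :
    V * diagonal g * Vᵀ + μ • 1 = V * diagonal (fun j => g j + μ) * Vᵀ := by
  calc V * diagonal g * Vᵀ + μ • 1 = V * (diagonal g + μ • 1) * Vᵀ := by
        rw [Matrix.mul_add, Matrix.add_mul, Matrix.mul_smul, Matrix.mul_one, Matrix.smul_mul, hV]
    _ = V * diagonal (fun j => g j + μ) * Vᵀ := by rw [smul_one_eq_diagonal, diagonal_add]

theorem inv_conj_diagonal {K : Type*} [Field K] {V : Matrix n n K} (hV : Vᵀ * V = 1)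
    {g : n → K} (hg : ∀ j, g j ≠ 0) :
    (V * diagonal g * Vᵀ)⁻¹ = V * diagonal g⁻¹ * Vᵀ := by
  refine inv_eq_left_inv ?_
  have hVVt : V * Vᵀ = 1 := mul_eq_one_comm.mp hV
  have hdiag : diagonal g⁻¹ * diagonal g = 1 := by
    rw [diagonal_mul_diagonal, ← diagonal_one]
    exact congrArg diagonal (funext fun j => inv_mul_cancel₀ (hg j))
  calc V * diagonal g⁻¹ * Vᵀ * (V * diagonal g * Vᵀ)
      = V * (diagonal g⁻¹ * (Vᵀ * V) * diagonal g) * Vᵀ := by simp only [Matrix.mul_assoc]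
    _ = 1 := by rw [hV, Matrix.mul_one, hdiag, Matrix.mul_one, hVVt]

theorem inv_conj_diagonal_add_smul_one {K : Type*} [Field K] {V : Matrix n n K}
    (hV : Vᵀ * V = 1) {g : n → K} {μ : K} (hg : ∀ j, g j + μ ≠ 0) :
    (V * diagonal g * Vᵀ + μ • 1)⁻¹ = V * diagonal (fun j => (g j + μ)⁻¹) * Vᵀ := by
  rw [conj_diagonal_add_smul_one (mul_eq_one_comm.mp hV), inv_conj_diagonal hV hg]
  rfl

theorem l2_opNorm_conj_of_transpose_mul_self_eq_one {V : Matrix n n ℝ} (hV : Vᵀ * V = 1)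
    (M : Matrix n n ℝ) : ‖V * M * Vᵀ‖ = ‖M‖ := by
  have hVu : V ∈ unitary (Matrix n n ℝ) := by
    rw [← Matrix.unitaryGroup, mem_unitaryGroup_iff', star_eq_conjTranspose,
      conjTranspose_eq_transpose_of_trivial, hV]
  have hVtu : Vᵀ ∈ unitary (Matrix n n ℝ) := by
    simpa [star_eq_conjTranspose] using Unitary.star_mem hVu
  rw [CStarRing.norm_mul_mem_unitary _ hVtu, CStarRing.norm_mem_unitary_mul _ hVu]

theorem PosSemidef.diagonal_nonneg_of_eq_conj {A V : Matrix n n ℝ} {d : n → ℝ}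
    (hA : A.PosSemidef) (hV : Vᵀ * V = 1) (hdecomp : A = V * diagonal d * Vᵀ) (j : n) :
    0 ≤ d j := by
  have hd : diagonal d = Vᵀ * A * V := by
    rw [hdecomp, Matrix.mul_assoc, Matrix.mul_assoc, hV, Matrix.mul_one, ← Matrix.mul_assoc, hV,
      Matrix.one_mul]
  have := hA.conjTranspose_mul_mul_same V
  rw [conjTranspose_eq_transpose_of_trivial, ← hd, posSemidef_diagonal_iff] at this
  exact this j

end Matrix

theorem pi_norm_eq_of_forall_abs_le {ι : Type*} [Fintype ι] {f : ι → ℝ} {i : ι}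
    (h : ∀ j, |f j| ≤ f i) : ‖f‖ = f i :=
  le_antisymm ((pi_norm_le_iff_of_nonneg ((abs_nonneg _).trans (h i))).2 h)
    ((le_abs_self _).trans (norm_le_pi_norm f i))

theorem div_mul_add_self_le_div_mul_add_self {μ s t : ℝ} (hμ : 0 < μ) (hs : 0 ≤ s)
    (hst : s ≤ t) : s / (μ * (s + μ)) ≤ t / (μ * (t + μ)) := by
  rw [div_le_div_iff₀ (mul_pos hμ (by linarith)) (mul_pos hμ (by linarith))]
  nlinarith [mul_nonneg (mul_nonneg hμ.le hμ.le) (sub_nonneg.2 hst)]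

theorem norm_truncated_resolvent_gap {n l : ℕ} {lam : Fin n → ℝ} (hanti : Antitone lam)
    (hlam : ∀ j, 0 ≤ lam j) {μ : ℝ} (hμ : 0 < μ) (hln : l < n) :
    ‖fun j : Fin n => if (j : ℕ) < l then 0 else lam j / (μ * (lam j + μ))‖
      = lam ⟨l, hln⟩ / (μ * (lam ⟨l, hln⟩ + μ)) := by
  refine (pi_norm_eq_of_forall_abs_le (i := ⟨l, hln⟩) fun j => ?_).trans (if_neg (lt_irrefl l))
  rw [Fin.val_mk, if_neg (lt_irrefl l)]
  split_ifs with hj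
  · rw [abs_zero]
    exact div_nonneg (hlam _) (mul_pos hμ (by linarith [hlam ⟨l, hln⟩])).le
  · rw [abs_of_nonneg (div_nonneg (hlam j) (mul_pos hμ (by linarith [hlam j])).le)]
    exact div_mul_add_self_le_div_mul_add_self hμ (hlam j) (hanti (not_lt.1 hj))

theorem regularized_inverse_bound_attained_general {n : ℕ}
    (A : Matrix (Fin n) (Fin n) ℝ) (hA : A.PosSemidef)
    (lam : Fin n → ℝ) (hanti : Antitone lam)
    (V : Matrix (Fin n) (Fin n) ℝ) (hV : Vᵀ * V = 1)
    (hdecomp : A = V * Matrix.diagonal lam * Vᵀ)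
    (l : ℕ) (hln : l < n)
    (μ : ℝ) (hμ : 0 < μ) :
    specNorm ((V * Matrix.diagonal (fun j : Fin n => if (j : ℕ) < l then lam j else 0) * Vᵀ
          + μ • (1 : Matrix (Fin n) (Fin n) ℝ))⁻¹
        - (A + μ • (1 : Matrix (Fin n) (Fin n) ℝ))⁻¹)
      = lam ⟨l, hln⟩ / (μ * (lam ⟨l, hln⟩ + μ)) := by
  have hlam := hA.diagonal_nonneg_of_eq_conj hV hdecomp
  have hgap : (fun j : Fin n => ((if (j : ℕ) < l then lam j else 0) + μ)⁻¹ - (lam j + μ)⁻¹)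
      = fun j : Fin n => if (j : ℕ) < l then 0 else lam j / (μ * (lam j + μ)) := by
    funext j
    split_ifs
    · exact sub_self _
    · rw [zero_add, inv_sub_inv hμ.ne' (by linarith [hlam j]), add_sub_cancel_right]
  rw [specNorm_eq_l2_opNorm, hdecomp,
    inv_conj_diagonal_add_smul_one hV fun j => by split_ifs <;> linarith [hlam j],
    inv_conj_diagonal_add_smul_one hV fun j => by linarith [hlam j],
    ← Matrix.sub_mul, ← Matrix.mul_sub, diagonal_sub, hgap,
    l2_opNorm_conj_of_transpose_mul_self_eq_one hV, l2_opNorm_diagonal]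
  exact norm_truncated_resolvent_gap hanti hlam hμ hln

/-- The regularized-inverse bound is attained by the best
rank-`ℓ` approximation `⌊A⌋_ℓ = ∑_{j≤ℓ} λ_j v_j v_jᵀ` obtained by
truncating the eigendecomposition:
`‖(⌊A⌋_ℓ+μI)⁻¹ − (A+μI)⁻¹‖ = λ_{ℓ+1}/(μ(λ_{ℓ+1}+μ))`. -/
theorem regularized_inverse_bound_attained {n : ℕ}
    (A : Matrix (Fin n) (Fin n) ℝ) (hA : A.PosSemidef)
    (lam : Fin n → ℝ) (hanti : Antitone lam)
    (V : Matrix (Fin n) (Fin n) ℝ) (hV : Vᵀ * V = 1)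
    (hdecomp : A = V * Matrix.diagonal lam * Vᵀ)
    (l : ℕ) (hl1 : 1 ≤ l) (hln : l < n)
    (μ : ℝ) (hμ : 0 < μ) :
    specNorm ((V * Matrix.diagonal (fun j : Fin n => if (j : ℕ) < l then lam j else 0) * Vᵀ
          + μ • (1 : Matrix (Fin n) (Fin n) ℝ))⁻¹
        - (A + μ • (1 : Matrix (Fin n) (Fin n) ℝ))⁻¹)
      = lam ⟨l, hln⟩ / (μ * (lam ⟨l, hln⟩ + μ)) :=
  regularized_inverse_bound_attained_general A hA lam hanti V hV hdecomp l hln μ hμ
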